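/- arXiv:2505.09253 — 6 statements merged into one kernel-verified Lean document; each statement's English description precedes it below -/
import Mathlib

section
/- Let (M,d) be a metric space, T : M → M an isometry, and x ∈ M. If the closure of the orbit O(x) = {Tⁿx : n ∈ ℤ} admits a T-invariant Borel probability measure μ, then μ(B(x,ε)) > 0 for every ε > 0, and any 2ε-separated subset of the orbit O(x) has cardinality at most μ(B(x,ε))⁻¹; in particular O(x) is totally bounded. -/
/-!
Since `T` is an isometry preserving `μ`, all balls of a given radius centred on the orbit of `x`
have the same measure as `B(x, ε)`. Countably many of them cover the closure of the orbit, which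
has full measure, so this common measure is positive; and the balls of radius `ε` around the points
of a `2ε`-separated set are disjoint, so at most `μ(B(x, ε))⁻¹` of them fit in a probability space.
A uniform bound on the size of separated subsets of the orbit makes it totally bounded.
-/

open MeasureTheory Metric Set
open scoped ENNReal NNReal

theorem packingNumber_le_of_forall_finset_card_le {X : Type*} [PseudoEMetricSpace X] {A : Set X}
    {ε : ℝ≥0} {N : ℕ}
    (h : ∀ S : Finset X, ↑S ⊆ A → IsSeparated ε (S : Set X) → S.card ≤ N) :
    packingNumber ε A ≤ N := by
  refine iSup₂_le fun C hCA => iSup_le fun hC => ?_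
  by_contra! hlt
  obtain ⟨t, htC, ht⟩ := exists_subset_encard_eq (Order.add_one_le_of_lt hlt)
  have htfin : t.Finite := finite_of_encard_eq_coe ht
  have hcard := h htfin.toFinset (by simpa using htC.trans hCA) (by simpa using hC.subset htC)
  rw [htfin.encard_eq_coe_toFinset_card] at ht
  norm_cast at ht
  omega

theorem totallyBounded_of_packingNumber_ne_top {X : Type*} [PseudoMetricSpace X] {A : Set X}
    (h : ∀ ε : ℝ≥0, 0 < ε → packingNumber ε A ≠ ⊤) : TotallyBounded A := by
  refine totallyBounded_iff.2 fun ε hε => ?_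
  lift ε to ℝ≥0 using hε.le
  have hε2 : 0 < ε / 2 := half_pos (mod_cast hε)
  have hfin := h _ hε2
  refine ⟨maximalSeparatedSet (ε / 2) A, ?_, ?_⟩
  · exact encard_ne_top_iff.1 (encard_maximalSeparatedSet hfin ▸ hfin)
  · refine (isCover_maximalSeparatedSet hfin).subset_iUnion_closedBall.trans ?_
    gcongr with y hy
    exact closedBall_subset_ball (by push_cast; linarith [hε2])

section MeasureOfBalls

variable {X : Type*} [PseudoMetricSpace X] [MeasurableSpace X] {μ : Measure X}

theorem exists_measure_ball_pos_of_countable {s : Set X} (hs : s.Countable)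
    (hμ : μ (closure s) ≠ 0) {ε : ℝ} (hε : 0 < ε) : ∃ y ∈ s, 0 < μ (ball y ε) := by
  by_contra! h
  refine hμ (measure_mono_null (closure_subset_thickening hε s) ?_)
  rw [thickening_eq_biUnion_ball, measure_biUnion_null_iff hs]
  exact fun y hy => nonpos_iff_eq_zero.1 (h y hy)

variable [OpensMeasurableSpace X]

theorem Isometry.measure_ball_apply {f : X → X} (hf : Isometry f) (hμ : MeasurePreserving f μ μ)
    (y : X) (r : ℝ) : μ (ball (f y) r) = μ (ball y r) := by
  rw [← hμ.measure_preimage measurableSet_ball.nullMeasurableSet, hf.preimage_ball]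

theorem Finset.card_le_inv_of_measure_ball_eq [IsProbabilityMeasure μ] {S : Finset X} {ε : ℝ}
    {c : ℝ≥0∞} (hS : (S : Set X).Pairwise fun a b => 2 * ε ≤ dist a b)
    (hc : ∀ a ∈ S, μ (ball a ε) = c) : (S.card : ℝ≥0∞) ≤ c⁻¹ := by
  have hdisj : (S : Set X).PairwiseDisjoint fun a => ball a ε :=
    hS.mono' fun _ _ hab => ball_disjoint_ball (by linarith)
  refine ENNReal.le_inv_iff_mul_le.2 ?_
  calc (S.card : ℝ≥0∞) * c = ∑ a ∈ S, μ (ball a ε) := by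
        rw [Finset.sum_congr rfl hc, Finset.sum_const, nsmul_eq_mul]
    _ = μ (⋃ a ∈ S, ball a ε) := (measure_biUnion_finset hdisj fun a _ => measurableSet_ball).symm
    _ ≤ 1 := prob_le_one

end MeasureOfBalls

def measurePreservingIsometries {X : Type*} [PseudoMetricSpace X] [MeasurableSpace X]
    [BorelSpace X] (μ : Measure X) : Subgroup (Equiv.Perm X) where
  carrier := {f | Isometry f ∧ MeasurePreserving f μ μ}
  mul_mem' := fun ⟨hf, hfμ⟩ ⟨hg, hgμ⟩ => ⟨hf.comp hg, hfμ.comp hgμ⟩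
  one_mem' := ⟨isometry_id, .id μ⟩
  inv_mem' := fun {f} ⟨hf, hfμ⟩ =>
    let e : X ≃ᵢ X := ⟨f, hf⟩
    ⟨e.symm.isometry, hfμ.symm e.toHomeomorph.toMeasurableEquiv⟩

theorem orbit_totally_bounded_of_invariant_measure
    {M : Type*} [MetricSpace M] [MeasurableSpace M] [BorelSpace M]
    (T : Equiv.Perm M) (hT : Isometry (⇑T)) (x : M)
    (μ : Measure M) [IsProbabilityMeasure μ]
    (hinv : MeasurePreserving (⇑T) μ μ)
    (hsupp : μ (closure (Set.range fun n : ℤ => (T ^ n) x)) = 1) :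
    (∀ ε : ℝ, 0 < ε → 0 < μ (Metric.ball x ε)) ∧
    (∀ ε : ℝ, 0 < ε → ∀ S : Finset M,
      (↑S ⊆ Set.range fun n : ℤ => (T ^ n) x) →
      (∀ a ∈ S, ∀ b ∈ S, a ≠ b → 2 * ε ≤ dist a b) →
      (S.card : ENNReal) ≤ (μ (Metric.ball x ε))⁻¹) ∧
    TotallyBounded (Set.range fun n : ℤ => (T ^ n) x) := by
  have hball : ∀ y ∈ Set.range fun n : ℤ => (T ^ n) x, ∀ r, μ (ball y r) = μ (ball x r) := by
    rintro _ ⟨n, rfl⟩ r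
    obtain ⟨hTn, hTnμ⟩ := zpow_mem (show T ∈ measurePreservingIsometries μ from ⟨hT, hinv⟩) n
    exact hTn.measure_ball_apply hTnμ x r
  have hpos : ∀ ε : ℝ, 0 < ε → 0 < μ (ball x ε) := fun ε hε => by
    obtain ⟨y, hy, hμy⟩ :=
      exists_measure_ball_pos_of_countable (countable_range _) (hsupp.trans_ne one_ne_zero) hε
    exact hball y hy ε ▸ hμy
  have hcard : ∀ ε : ℝ, 0 < ε → ∀ S : Finset M, (↑S ⊆ Set.range fun n : ℤ => (T ^ n) x) →
      (∀ a ∈ S, ∀ b ∈ S, a ≠ b → 2 * ε ≤ dist a b) → (S.card : ℝ≥0∞) ≤ (μ (ball x ε))⁻¹ :=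
    fun ε _ S hSO hS => Finset.card_le_inv_of_measure_ball_eq
      (fun a ha b hb hab => hS a ha b hb hab) fun a ha => hball a (hSO ha) ε
  refine ⟨hpos, hcard, totallyBounded_of_packingNumber_ne_top fun ε hε => ?_⟩
  obtain ⟨N, hN⟩ := ENNReal.exists_nat_gt (ENNReal.inv_ne_top.2 (hpos (ε / 2) (by positivity)).ne')
  refine ne_top_of_le_ne_top (ENat.natCast_ne_top N) <|
    packingNumber_le_of_forall_finset_card_le fun S hSO hS => ?_
  have hS' : ∀ a ∈ S, ∀ b ∈ S, a ≠ b → 2 * (ε / 2 : ℝ) ≤ dist a b := fun a ha b hb hab => by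
    have hεab : (ε : ℝ≥0∞) < edist a b := hS ha hb hab
    rw [edist_nndist, ENNReal.coe_lt_coe, ← NNReal.coe_lt_coe, coe_nndist] at hεab
    linarith
  exact_mod_cast ((hcard _ (by positivity) S hSO hS').trans_lt hN).le
end

section
/- Let B be a finite set of pairwise coprime integers ≥ 2, r ∈ ℤ, and B_{|r} := {b ∈ B : b | r}. Then the density of M_B ∪ (r + M_B), where M_B = ⋃_{b ∈ B} bℤ, equals 1 − (∏_{b ∈ B}(1 − 1/b)) · ∏_{b ∈ B∖B_{|r}} (1 − 1/(b−1)). -/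
open Filter

/-- `M_B = ⋃_{b ∈ B} bℤ` as a subset of `ℤ`. -/
def MB (B : Finset ℕ) : Set ℤ := {n : ℤ | ∃ b ∈ B, (b : ℤ) ∣ n}

open scoped Classical in
/-- Counting function for the two-sided density of a subset of `ℤ`. -/
noncomputable def cnt (E : Set ℤ) (n : ℕ) : ℝ :=
  (((Finset.Icc (-(n : ℤ)) n).filter (fun i => i ∈ E)).card : ℝ) / (2 * n + 1)

/-!
Membership in `M_B ∪ (r + M_B)` depends only on `n` modulo `N = ∏_{b ∈ B} b`, and a periodic set
has density (number of residues it contains) / `N`. By the Chinese remainder theorem the residues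
avoiding `M_B ∪ (r + M_B)` are those that avoid `0` and `r` modulo every `b`, so there are
`∏_{b ∈ B} (b - #{0, r mod b})` of them, and `b - #{0, r mod b}` is `b - 1` if `b ∣ r` and `b - 2`
otherwise.
-/

open Finset Topology

section Periodic

variable {N : ℕ} [NeZero N] (S : Finset (ZMod N))

theorem card_filter_Ico_intCast_mem (c : ℤ) :
    #{i ∈ Ico c (c + N) | ((i : ℤ) : ZMod N) ∈ S} = #S := by
  refine card_nbij (fun i : ℤ => (i : ZMod N)) (fun i hi => (mem_filter.mp hi).2) ?_ ?_
  · intro i hi j hj hij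
    rw [mem_coe, mem_filter, mem_Ico] at hi hj
    have hdvd := (ZMod.intCast_eq_intCast_iff_dvd_sub i j N).mp hij
    have := Int.eq_zero_of_abs_lt_dvd hdvd (abs_lt.mpr ⟨by omega, by omega⟩)
    omega
  · intro s hs
    have hlt := ZMod.val_lt (s - (c : ZMod N))
    refine ⟨c + (s - (c : ZMod N)).val, ?_, by simp⟩
    rw [mem_coe, mem_filter, mem_Ico]
    exact ⟨⟨by omega, by omega⟩, by simpa using hs⟩

theorem card_filter_Ico_mul_intCast_mem (c : ℤ) (q : ℕ) :
    #{i ∈ Ico c (c + N * q) | ((i : ℤ) : ZMod N) ∈ S} = q * #S := by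
  induction q with
  | zero => simp
  | succ q ih =>
    have hsplit : Ico c (c + N * (q + 1 : ℕ)) =
        Ico c (c + N * q) ∪ Ico (c + N * q) (c + N * q + N) := by
      rw [Ico_union_Ico_eq_Ico (by simp; positivity) (by omega)]
      congr 1; push_cast; ring
    rw [hsplit, filter_union, card_union_of_disjoint
      (disjoint_filter_filter (Ico_disjoint_Ico_consecutive _ _ _)), ih,
      card_filter_Ico_intCast_mem]
    ring

theorem abs_card_filter_Ico_intCast_mem_sub_le (c : ℤ) (L : ℕ) :
    |(#{i ∈ Ico c (c + L) | ((i : ℤ) : ZMod N) ∈ S} : ℝ) - L * #S / N| ≤ #S := by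
  set q := L / N
  have hN := Nat.pos_of_neZero N
  have mono {L L' : ℕ} (h : L ≤ L') : #{i ∈ Ico c (c + L) | ((i : ℤ) : ZMod N) ∈ S} ≤
      #{i ∈ Ico c (c + L') | ((i : ℤ) : ZMod N) ∈ S} :=
    card_le_card (filter_subset_filter _ (Ico_subset_Ico_right (by omega)))
  -- `[c, c + L)` contains `q` full periods and is contained in `q + 1` of them.
  have hlow : (q : ℝ) * #S ≤ #{i ∈ Ico c (c + L) | ((i : ℤ) : ZMod N) ∈ S} := by
    rw [← Nat.cast_mul, ← card_filter_Ico_mul_intCast_mem]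
    exact_mod_cast mono (Nat.mul_div_le L N)
  have hhigh : (#{i ∈ Ico c (c + L) | ((i : ℤ) : ZMod N) ∈ S} : ℝ) ≤ (q + 1) * #S := by
    rw [← Nat.cast_succ, ← Nat.cast_mul, ← card_filter_Ico_mul_intCast_mem]
    exact_mod_cast mono (Nat.lt_mul_div_succ L hN).le
  have hLlow : (q : ℝ) * N ≤ L := by exact_mod_cast Nat.div_mul_le_self L N
  have hLhigh : (L : ℝ) ≤ (q + 1) * N := by
    exact_mod_cast (Nat.lt_mul_div_succ L hN).le.trans_eq (mul_comm _ _)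
  have hN' : (0 : ℝ) < N := by exact_mod_cast hN
  have hk : (0 : ℝ) ≤ #S := Nat.cast_nonneg _
  have hmean_low : (q : ℝ) * #S ≤ L * #S / N := by
    rw [le_div_iff₀ hN']; nlinarith
  have hmean_high : L * #S / N ≤ ((q : ℝ) + 1) * #S := by
    rw [div_le_iff₀ hN']; nlinarith
  rw [abs_le]
  constructor <;> linarith

theorem tendsto_cnt_intCast_mem :
    Tendsto (cnt {n : ℤ | (n : ZMod N) ∈ S}) atTop (𝓝 (#S / N)) := by
  have bound (n : ℕ) : ‖cnt {n : ℤ | (n : ZMod N) ∈ S} n - #S / N‖ ≤ #S / (2 * n + 1) := by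
    have hpos : (0 : ℝ) < 2 * n + 1 := by positivity
    have hcnt : cnt {n : ℤ | (n : ZMod N) ∈ S} n =
        #{i ∈ Ico (-n : ℤ) (-n + (2 * n + 1 : ℕ)) | ((i : ℤ) : ZMod N) ∈ S} / (2 * n + 1) := by
      have hIcc : Icc (-n : ℤ) n = Ico (-n : ℤ) (-n + (2 * n + 1 : ℕ)) := by
        ext i; simp only [mem_Icc, mem_Ico]; omega
      unfold cnt
      rw [hIcc]
      congr
    rw [Real.norm_eq_abs, hcnt, div_sub' hpos.ne', abs_div, abs_of_pos hpos]
    gcongr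
    calc _ = |(#{i ∈ Ico (-n : ℤ) (-n + (2 * n + 1 : ℕ)) | ((i : ℤ) : ZMod N) ∈ S} : ℝ) -
          (2 * n + 1 : ℕ) * #S / N| := by push_cast; ring_nf
      _ ≤ #S := abs_card_filter_Ico_intCast_mem_sub_le S (-n) (2 * n + 1)
  have hdecay : Tendsto (fun n : ℕ => (#S : ℝ) / (2 * n + 1)) atTop (𝓝 0) :=
    tendsto_const_nhds.div_atTop <| tendsto_atTop_add_const_right _ _ <|
      tendsto_natCast_atTop_atTop.const_mul_atTop two_pos
  simpa using (squeeze_zero_norm bound hdecay).add_const ((#S : ℝ) / N)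

end Periodic

theorem cnt_compl (E : Set ℤ) (n : ℕ) : cnt Eᶜ n = 1 - cnt E n := by
  classical
  have hpos : (2 * n + 1 : ℝ) ≠ 0 := by positivity
  have hcard : #(Icc (-n : ℤ) n) = 2 * n + 1 := by rw [Int.card_Icc]; omega
  unfold cnt
  rw [eq_sub_iff_add_eq, ← add_div, div_eq_one_iff_eq hpos, add_comm]
  have := (card_filter_add_card_filter_not (s := Icc (-n : ℤ) n) (· ∈ E)).trans hcard
  convert congrArg (Nat.cast (R := ℝ)) this using 1
  · push_cast
    congr
  · push_cast; ring

open Function in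
theorem card_filter_forall_cast_mem {ι : Type*} [Fintype ι] [DecidableEq ι] (a : ι → ℕ)
    (hcop : Pairwise (Nat.Coprime on a)) [NeZero (∏ i, a i)] (T : ∀ i, Finset (ZMod (a i))) :
    #{x : ZMod (∏ i, a i) | ∀ i, (x.cast : ZMod (a i)) ∈ T i} = ∏ i, #(T i) := by
  rw [← Fintype.card_piFinset]
  refine card_equiv (ZMod.prodEquivPi a hcop).toEquiv fun x => ?_
  simp [Fintype.mem_piFinset]

theorem card_compl_pair_zero_intCast_div (b : ℕ) [NeZero b] (r : ℤ) :
    (#({0, (r : ZMod b)}ᶜ : Finset (ZMod b)) : ℝ) / b =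
      (1 - 1 / (b : ℝ)) * if (b : ℤ) ∣ r then 1 else 1 - 1 / ((b : ℝ) - 1) := by
  have hb : (b : ℝ) ≠ 0 := NeZero.ne _
  by_cases hr : (b : ℤ) ∣ r
  · rw [(ZMod.intCast_zmod_eq_zero_iff_dvd r b).mpr hr, if_pos hr, insert_eq_self.mpr
      (mem_singleton_self 0), card_compl, ZMod.card, card_singleton,
      Nat.cast_sub NeZero.one_le, Nat.cast_one]
    field_simp
  · have hr0 : (r : ZMod b) ≠ 0 := mt (ZMod.intCast_zmod_eq_zero_iff_dvd r b).mp hr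
    have hb2 : 2 ≤ b := by
      have : b ≠ 1 := by rintro rfl; exact hr (one_dvd r)
      have := NeZero.ne b
      omega
    have hb1 : (b : ℝ) - 1 ≠ 0 := by
      rw [sub_ne_zero]; exact_mod_cast (by omega : b ≠ 1)
    rw [if_neg hr, card_compl, ZMod.card, card_pair hr0.symm, Nat.cast_sub hb2, Nat.cast_two]
    field_simp
    ring

theorem compl_MB_union_shift (B : Finset ℕ) (r : ℤ) :
    (MB B ∪ {n : ℤ | n - r ∈ MB B})ᶜ =
      {n : ℤ | ∀ b ∈ B, (n : ZMod b) ∉ ({0, (r : ZMod b)} : Finset (ZMod b))} := by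
  ext n
  simp [MB, ZMod.intCast_zmod_eq_zero_iff_dvd, ZMod.intCast_eq_intCast_iff_dvd_sub,
    dvd_sub_comm, forall_and]

theorem density_MB_union_shift_coprime (B : Finset ℕ) (hB : ∀ b ∈ B, 2 ≤ b)
    (hcop : ∀ b ∈ B, ∀ c ∈ B, b ≠ c → Nat.Coprime b c) (r : ℤ) :
    Filter.Tendsto (cnt (MB B ∪ {n : ℤ | n - r ∈ MB B})) Filter.atTop
      (nhds (1 - (∏ b ∈ B, (1 - 1 / (b : ℝ))) *
        ∏ b ∈ B.filter (fun b : ℕ => ¬ ((b : ℤ) ∣ r)), (1 - 1 / ((b : ℝ) - 1)))) := by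
  have (b : B) : NeZero (b : ℕ) := ⟨by have := hB b b.2; omega⟩
  have : NeZero (∏ b : B, (b : ℕ)) := ⟨prod_ne_zero_iff.mpr fun b _ => NeZero.ne _⟩
  have hcop' : Pairwise (Function.onFun Nat.Coprime fun b : B => (b : ℕ)) :=
    fun b c hbc => hcop b b.2 c c.2 (Subtype.coe_injective.ne hbc)
  let T (b : B) : Finset (ZMod b) := {0, (r : ZMod b)}ᶜ
  let S : Finset (ZMod (∏ b : B, (b : ℕ))) := {x | ∀ b, (x.cast : ZMod b) ∈ T b}
  have hU : MB B ∪ {n | n - r ∈ MB B} = {n : ℤ | (n : ZMod _) ∈ S}ᶜ := by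
    rw [← compl_compl (MB B ∪ _), compl_MB_union_shift]
    congr 1
    ext n
    simp only [Set.mem_ofPred_eq, S, T, mem_compl, mem_filter, mem_univ, true_and, Subtype.forall]
    refine forall₂_congr fun b hb => ?_
    rw [ZMod.cast_intCast (dvd_prod_of_mem (fun b : B => (b : ℕ)) (mem_univ ⟨b, hb⟩))]
  have hS : (#S : ℝ) / (∏ b : B, (b : ℕ) : ℕ) = (∏ b ∈ B, (1 - 1 / (b : ℝ))) *
      ∏ b ∈ B.filter (fun b : ℕ => ¬ ((b : ℤ) ∣ r)), (1 - 1 / ((b : ℝ) - 1)) := by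
    rw [card_filter_forall_cast_mem _ hcop', Nat.cast_prod, Nat.cast_prod, ← prod_div_distrib]
    simp only [T, card_compl_pair_zero_intCast_div]
    rw [prod_filter, ← prod_mul_distrib]
    simp only [ite_not]
    exact prod_coe_sort B fun b : ℕ =>
      (1 - 1 / (b : ℝ)) * if (b : ℤ) ∣ r then 1 else 1 - 1 / ((b : ℝ) - 1)
  rw [hU, ← hS]
  exact ((tendsto_cnt_intCast_mem S).const_sub 1).congr fun n => (cnt_compl _ n).symm
end

section
/- Let B be a finite set of pairwise coprime integers ≥ 2, let r ∈ ℤ, r ≠ 0, and set r' := lcm{b ∈ B : b | r}. Then d(M_B ∪ (M_B + r)) = d(M_B ∪ (M_B + r')), where M_B = ⋃_{b∈B} bℤ and d denotes natural density. -/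
/-!
Both sets are periodic modulo `N = ∏ b`, and by the Chinese remainder theorem a residue mod `N`
is a tuple of residues mod the `b ∈ B`. An integer `n` lies in `M_B ∪ (M_B + s)` iff some
coordinate of its tuple is `0` or `s`, so the density is the proportion of such tuples.
By pairwise coprimality `b ∣ r ↔ b ∣ r'` for every `b ∈ B`, so modulo each `b` the pairs
`{0, r}` and `{0, r'}` have the same shape, and transposing `r` and `r'` in every coordinate
matches the two sets of tuples.
-/

open Filter

open Finset Topology
open scoped Function

lemma abs_card_Ico_filter_intCast_eq_sub_le {N : ℕ} [NeZero N] {a b : ℤ} (hab : a ≤ b)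
    (c : ZMod N) : |(#{x ∈ Ico a b | ((x : ℤ) : ZMod N) = c} : ℝ) - (b - a) / N| ≤ 1 := by
  have hN : (0 : ℚ) < N := by exact_mod_cast Nat.pos_of_neZero N
  have hmodEq :
      {x ∈ Ico a b | ((x : ℤ) : ZMod N) = c} = {x ∈ Ico a b | x ≡ c.val [ZMOD N]} := by
    refine filter_congr fun x _ => ?_
    rw [← ZMod.intCast_eq_intCast_iff, Int.cast_natCast, ZMod.natCast_zmod_val]
  have hcard := Int.Ico_filter_modEq_card a b (r := N) (by exact_mod_cast hN) c.val
  have hceil : ⌈(a - c.val) / (N : ℚ)⌉ ≤ ⌈(b - c.val) / (N : ℚ)⌉ :=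
    Int.ceil_mono (div_le_div_of_nonneg_right (by simpa using hab) hN.le)
  push_cast at hcard
  rw [← hmodEq, max_eq_left (sub_nonneg.2 hceil)] at hcard
  suffices |((#{x ∈ Ico a b | ((x : ℤ) : ZMod N) = c} : ℤ) : ℚ) - (b - a) / N| ≤ 1 by
    exact_mod_cast this
  have hb₁ := Int.le_ceil ((b - c.val) / (N : ℚ))
  have hb₂ := Int.ceil_lt_add_one ((b - c.val) / (N : ℚ))
  have ha₁ := Int.le_ceil ((a - c.val) / (N : ℚ))
  have ha₂ := Int.ceil_lt_add_one ((a - c.val) / (N : ℚ))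
  have hsplit : ((b : ℚ) - a) / N = (b - c.val) / N - (a - c.val) / N := by ring
  rw [hcard, hsplit, abs_le]
  push_cast
  constructor <;> linarith

lemma cnt_eq_card_div (E : Set ℤ) [DecidablePred (· ∈ E)] (n : ℕ) :
    cnt E n = #{i ∈ Icc (-(n : ℤ)) n | i ∈ E} / (2 * n + 1) := by
  rw [cnt]
  congr

theorem tendsto_cnt_setOf_intCast_mem {N : ℕ} [NeZero N] (S : Finset (ZMod N)) :
    Tendsto (cnt {n : ℤ | (n : ZMod N) ∈ S}) atTop (𝓝 (#S / N)) := by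
  have hbound (n : ℕ) :
      |cnt {n : ℤ | (n : ZMod N) ∈ S} n - #S / N| ≤ #S / (2 * n + 1) := by
    have hpos : (0 : ℝ) < 2 * n + 1 := by positivity
    have hfiber (c : ZMod N) : |(#{x ∈ Icc (-(n : ℤ)) n | ((x : ℤ) : ZMod N) = c} : ℝ)
        - (2 * n + 1) / N| ≤ 1 := by
      convert abs_card_Ico_filter_intCast_eq_sub_le (a := -(n : ℤ)) (b := n + 1) (by omega) c
        using 4
      · rw [Ico_add_one_right_eq_Icc]
      · push_cast; ring
    have hcount : cnt {n : ℤ | (n : ZMod N) ∈ S} n =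
        (∑ c ∈ S, (#{x ∈ Icc (-(n : ℤ)) n | ((x : ℤ) : ZMod N) = c} : ℝ)) /
          (2 * n + 1) := by
      rw [cnt_eq_card_div]
      simp only [Set.mem_ofPred_eq]
      rw [card_eq_sum_card_fiberwise (f := fun x : ℤ => (x : ZMod N)) (t := S)
        fun x hx => by exact (mem_filter.1 hx).2]
      push_cast
      refine congrArg (· / _) (sum_congr rfl fun c hc => ?_)
      rw [filter_filter]
      exact congrArg _ (congrArg _ (filter_congr fun x _ => and_iff_right_of_imp (· ▸ hc)))
    calc |cnt {n : ℤ | (n : ZMod N) ∈ S} n - #S / N|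
        = |∑ c ∈ S, ((#{x ∈ Icc (-(n : ℤ)) n | ((x : ℤ) : ZMod N) = c} : ℝ)
            - (2 * n + 1) / N)| / (2 * n + 1) := by
          rw [hcount, sum_sub_distrib, sum_const, nsmul_eq_mul, ← abs_of_pos hpos, ← abs_div,
            abs_of_pos hpos]
          congr 1
          field_simp
      _ ≤ #S / (2 * n + 1) := by
          gcongr
          simpa using (abs_sum_le_sum_abs _ _).trans (sum_le_sum fun c _ => hfiber c)
  have hlim : Tendsto (fun n : ℕ => (#S : ℝ) / (2 * n + 1)) atTop (𝓝 0) :=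
    tendsto_const_nhds.div_atTop <| tendsto_atTop_add_const_right _ _ <|
      tendsto_natCast_atTop_atTop.const_mul_atTop two_pos
  exact tendsto_iff_norm_sub_tendsto_zero.2 <|
    squeeze_zero (fun _ => norm_nonneg _) hbound hlim

theorem tendsto_cnt_setOf_residues_mem {ι : Type*} [Fintype ι] (a : ι → ℕ)
    [∀ i, NeZero (a i)] (ha : Pairwise (Nat.Coprime on a)) (T : Set (Π i, ZMod (a i))) :
    Tendsto (cnt {n : ℤ | (fun i => (n : ZMod (a i))) ∈ T}) atTop
      (𝓝 (Nat.card T / ∏ i, (a i : ℝ))) := by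
  classical
  have : NeZero (∏ i, a i) := ⟨prod_ne_zero_iff.2 fun i _ => NeZero.ne (a i)⟩
  let e := (ZMod.prodEquivPi a ha).toEquiv
  have he (n : ℤ) : e n = fun i => (n : ZMod (a i)) := funext fun i => by simp [e]
  have hset : {n : ℤ | (fun i => (n : ZMod (a i))) ∈ T}
      = {n : ℤ | (n : ZMod (∏ i, a i)) ∈ T.toFinset.map e.symm.toEmbedding} := by
    ext n
    simp [mem_map_equiv, he]
  rw [hset, Nat.card_eq_card_toFinset]
  simpa using tendsto_cnt_setOf_intCast_mem (T.toFinset.map e.symm.toEmbedding)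

lemma swap_apply_eq_zero_or_eq_iff {R : Type*} [Zero R] [DecidableEq R] {s t : R}
    (h : s = 0 ↔ t = 0) (y : R) :
    (Equiv.swap s t y = 0 ∨ Equiv.swap s t y = t) ↔ (y = 0 ∨ y = s) := by
  rw [Equiv.swap_apply_eq_iff, Equiv.swap_apply_eq_iff, Equiv.swap_apply_right]
  by_cases hs : s = 0
  · rw [hs, ← h.1 hs, Equiv.swap_self, Equiv.refl_apply]
  · rw [Equiv.swap_apply_of_ne_of_ne (Ne.symm hs) (Ne.symm (mt h.2 hs))]

lemma dvd_lcm_filter_dvd_iff {B : Finset ℕ} (hB : (B : Set ℕ).Pairwise Nat.Coprime)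
    {b : ℕ} (hb : b ∈ B) (hb1 : b ≠ 1) (r : ℤ) :
    (b : ℤ) ∣ ({c ∈ B | ((c : ℕ) : ℤ) ∣ r}.lcm id : ℕ) ↔ (b : ℤ) ∣ r := by
  refine ⟨fun hdvd => ?_, fun hbr =>
    Int.natCast_dvd_natCast.2 (dvd_lcm (mem_filter.2 ⟨hb, hbr⟩))⟩
  by_contra hbr
  have hcop : Nat.Coprime b ({c ∈ B | ((c : ℕ) : ℤ) ∣ r}.lcm id) :=
    Nat.Coprime.coprime_dvd_right (lcm_dvd_prod _ _) <| Nat.Coprime.prod_right fun c hc =>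
      hB hb (mem_filter.1 hc).1 fun hbc => hbr (hbc ▸ (mem_filter.1 hc).2)
  exact hb1 (hcop.eq_one_of_dvd (Int.natCast_dvd_natCast.1 hdvd))

def unionShiftResidues (B : Finset ℕ) (s : ℤ) : Set (Π b : B, ZMod b) :=
  {x | ∃ b, x b = 0 ∨ x b = s}

lemma MB_union_shift_eq_setOf (B : Finset ℕ) (s : ℤ) :
    MB B ∪ {n | n - s ∈ MB B} =
      {n : ℤ | (fun b : B => (n : ZMod b)) ∈ unionShiftResidues B s} := by
  ext n
  simp [MB, unionShiftResidues, ZMod.intCast_zmod_eq_zero_iff_dvd,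
    ZMod.intCast_eq_intCast_iff_dvd_sub, dvd_sub_comm (b := s), exists_or]

lemma natCard_unionShiftResidues_eq {B : Finset ℕ} {s t : ℤ}
    (h : ∀ b ∈ B, (b : ℤ) ∣ s ↔ (b : ℤ) ∣ t) :
    Nat.card (unionShiftResidues B s) = Nat.card (unionShiftResidues B t) := by
  refine Nat.card_congr <| Equiv.subtypeEquiv (p := (· ∈ unionShiftResidues B s))
    (q := (· ∈ unionShiftResidues B t))
    (Equiv.piCongrRight fun b => Equiv.swap (s : ZMod b) (t : ZMod b)) fun x => ?_
  refine exists_congr fun b => (swap_apply_eq_zero_or_eq_iff ?_ (x b)).symm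
  simpa only [ZMod.intCast_zmod_eq_zero_iff_dvd] using h b b.2

open scoped Classical in
theorem density_union_shift_eq_lcm_shift_general (B : Finset ℕ) (hB : ∀ b ∈ B, 2 ≤ b)
    (hcop : ∀ b ∈ B, ∀ c ∈ B, b ≠ c → Nat.Coprime b c) (r : ℤ) :
    ∃ L : ℝ,
      Filter.Tendsto (cnt (MB B ∪ {n : ℤ | n - r ∈ MB B})) Filter.atTop (nhds L) ∧
      Filter.Tendsto
        (cnt (MB B ∪ {n : ℤ | n - (((B.filter (fun b : ℕ => (b : ℤ) ∣ r)).lcm id : ℕ) : ℤ) ∈ MB B}))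
        Filter.atTop (nhds L) := by
  have : ∀ b : B, NeZero (b : ℕ) := fun b => ⟨by have := hB b b.2; omega⟩
  have hcop' : Pairwise (Nat.Coprime on fun b : B => (b : ℕ)) :=
    fun b c hbc => hcop b b.2 c c.2 (Subtype.coe_ne_coe.2 hbc)
  have hdvd : ∀ b ∈ B,
      (b : ℤ) ∣ r ↔ (b : ℤ) ∣ ({c ∈ B | ((c : ℕ) : ℤ) ∣ r}.lcm id : ℕ) :=
    fun b hb => (dvd_lcm_filter_dvd_iff hcop hb (by have := hB b hb; omega) r).symm
  have hlim (s : ℤ) := MB_union_shift_eq_setOf B s ▸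
    tendsto_cnt_setOf_residues_mem _ hcop' (unionShiftResidues B s)
  refine ⟨_, hlim r, ?_⟩
  rw [natCard_unionShiftResidues_eq hdvd]
  exact hlim _

open scoped Classical in
theorem density_union_shift_eq_lcm_shift (B : Finset ℕ) (hB : ∀ b ∈ B, 2 ≤ b)
    (hcop : ∀ b ∈ B, ∀ c ∈ B, b ≠ c → Nat.Coprime b c) (r : ℤ) (hr : r ≠ 0) :
    ∃ L : ℝ,
      Filter.Tendsto (cnt (MB B ∪ {n : ℤ | n - r ∈ MB B})) Filter.atTop (nhds L) ∧
      Filter.Tendsto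
        (cnt (MB B ∪ {n : ℤ | n - (((B.filter (fun b : ℕ => (b : ℤ) ∣ r)).lcm id : ℕ) : ℤ) ∈ MB B}))
        Filter.atTop (nhds L) :=
  density_union_shift_eq_lcm_shift_general B hB hcop r
end

section
/- Let B be a finite set of integers ≥ 2 and r, r' ∈ ℤ with r' = r·m where m is coprime to every element of B. Then d(M_B ∪ (M_B + r)) = d(M_B ∪ (M_B + r')), where M_B = ⋃_{b∈B} bℤ. -/
open Filter

/-!
Both sets are periodic modulo `N = ∏ b ∈ B, b`: each is the preimage of a set of residues in
`ZMod N`, so its density is the proportion of residues it contains. Since `m` is a unit modulo `N`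
and `M_B` is stable under multiplication by `m`, multiplication by `m` maps the residues of
`M_B ∪ (M_B + r)` bijectively onto those of `M_B ∪ (M_B + rm)`.
-/

open Finset Topology

lemma Int.card_filter_Ico_add_add (p : ℤ → Prop) [DecidablePred p] (a : ℤ) (k l : ℕ) :
    #{x ∈ Ico a (a + k + l) | p x} =
      #{x ∈ Ico a (a + k) | p x} + #{x ∈ Ico (a + k) (a + k + l) | p x} := by
  rw [← card_union_of_disjoint (disjoint_filter_filter (Ico_disjoint_Ico_consecutive _ _ _)),
    ← filter_union, Ico_union_Ico_eq_Ico] <;> omega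

namespace ZMod

open scoped Classical

variable {N : ℕ} [NeZero N]

lemma bijOn_intCast_Ico (a : ℤ) :
    Set.BijOn (Int.cast : ℤ → ZMod N) (Set.Ico a (a + N)) Set.univ := by
  refine ⟨Set.mapsTo_univ _ _, fun x hx y hy hxy => ?_, fun z _ => ?_⟩
  · obtain ⟨hax, hxa⟩ := hx
    obtain ⟨hay, hya⟩ := hy
    rw [intCast_eq_intCast_iff_dvd_sub] at hxy
    have := Int.eq_zero_of_abs_lt_dvd hxy (abs_sub_lt_iff.mpr ⟨by omega, by omega⟩)
    omega
  · have := (z - a).val_lt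
    exact ⟨a + ((z - a).val : ℤ), ⟨by omega, by omega⟩, by simp⟩

lemma card_filter_Ico_intCast_mem (S : Set (ZMod N)) (a : ℤ) :
    #{x ∈ Ico a (a + N) | ((x : ℤ) : ZMod N) ∈ S} = S.ncard := by
  have hbij := bijOn_intCast_Ico (N := N) a
  have hset : (↑{x ∈ Ico a (a + N) | ((x : ℤ) : ZMod N) ∈ S} : Set ℤ) =
      Set.Ico a (a + N) ∩ Int.cast ⁻¹' S := by
    ext; simp
  rw [← Set.ncard_coe_finset, hset, ← (hbij.injOn.mono Set.inter_subset_left).ncard_image,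
    Set.image_inter_preimage, hbij.image_eq, Set.univ_inter]

lemma card_filter_Ico_intCast_mem_mul (S : Set (ZMod N)) (a : ℤ) (k : ℕ) :
    #{x ∈ Ico a (a + (N * k : ℕ)) | ((x : ℤ) : ZMod N) ∈ S} = k * S.ncard := by
  induction k with
  | zero => simp
  | succ k ih =>
    have hsplit : a + ((N * (k + 1) : ℕ) : ℤ) = a + (N * k : ℕ) + N := by push_cast; ring
    rw [hsplit, Int.card_filter_Ico_add_add, ih, card_filter_Ico_intCast_mem]
    ring

lemma abs_card_filter_Ico_intCast_mem_sub_le (S : Set (ZMod N)) (a : ℤ) (L : ℕ) :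
    |(#{x ∈ Ico a (a + L) | ((x : ℤ) : ZMod N) ∈ S} : ℝ) - L * S.ncard / N| ≤ N := by
  obtain ⟨e, he, hcount⟩ : ∃ e ≤ L % N,
      #{x ∈ Ico a (a + L) | ((x : ℤ) : ZMod N) ∈ S} = L / N * S.ncard + e := by
    refine ⟨#{x ∈ Ico (a + (N * (L / N) : ℕ)) (a + (N * (L / N) : ℕ) + (L % N : ℕ)) |
      ((x : ℤ) : ZMod N) ∈ S}, (card_filter_le _ _).trans (by simp), ?_⟩
    rw [← card_filter_Ico_intCast_mem_mul, ← Int.card_filter_Ico_add_add, add_assoc,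
      ← Nat.cast_add, Nat.div_add_mod]
  have hc : S.ncard ≤ N := by simpa using S.ncard_le_card
  have hL : (L : ℝ) = N * (L / N : ℕ) + (L % N : ℕ) := by
    exact_mod_cast (Nat.div_add_mod L N).symm
  have hs : L % N < N := Nat.mod_lt _ (NeZero.pos N)
  have hN : (0 : ℝ) < N := by exact_mod_cast NeZero.pos N
  set q := L / N
  set s := L % N
  set c := S.ncard
  have hsc : (s * c / N : ℝ) ≤ s := by
    rw [div_le_iff₀ hN]
    exact mul_le_mul_of_nonneg_left (by exact_mod_cast hc) (Nat.cast_nonneg _)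
  have hrem : ((q * c + e : ℕ) : ℝ) - L * c / N = e - s * c / N := by
    rw [hL]; push_cast; field_simp; ring
  rw [hcount, hrem, abs_le]
  have he' : (e : ℝ) ≤ s := by exact_mod_cast he
  have hs' : (s : ℝ) < N := by exact_mod_cast hs
  constructor <;> nlinarith [show (0 : ℝ) ≤ s * c / N by positivity]

theorem tendsto_cnt_preimage_intCast (S : Set (ZMod N)) :
    Tendsto (cnt (Int.cast ⁻¹' S)) atTop (𝓝 (S.ncard / N)) := by
  have hbound (n : ℕ) : |cnt (Int.cast ⁻¹' S) n - S.ncard / N| ≤ N / (2 * n + 1) := by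
    have hpos : (0 : ℝ) < 2 * n + 1 := by positivity
    have hIcc : Icc (-(n : ℤ)) n = Ico (-(n : ℤ)) (-n + (2 * n + 1 : ℕ)) := by
      ext; simp; omega
    have hscale : (S.ncard / N : ℝ) = ((2 * n + 1 : ℕ) : ℝ) * S.ncard / N / (2 * n + 1) := by
      push_cast; field_simp
    rw [cnt, hIcc, hscale, ← sub_div, abs_div, abs_of_pos hpos]
    gcongr
    exact abs_card_filter_Ico_intCast_mem_sub_le S (-n) (2 * n + 1)
  have hlim : Tendsto (fun n : ℕ => (N : ℝ) / (2 * n + 1)) atTop (𝓝 0) :=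
    tendsto_const_nhds.div_atTop <| tendsto_atTop_add_const_right _ _ <|
      tendsto_natCast_atTop_atTop.const_mul_atTop two_pos
  exact tendsto_iff_norm_sub_tendsto_zero.mpr (squeeze_zero (fun _ => norm_nonneg _) hbound hlim)

end ZMod

lemma Set.ncard_union_setOf_sub_mul_mem {R : Type*} [CommRing R] {S : Set R} {u : R}
    (hu : IsUnit u) (hS : ∀ z, u * z ∈ S ↔ z ∈ S) (t : R) :
    (S ∪ {z | z - t * u ∈ S}).ncard = (S ∪ {z | z - t ∈ S}).ncard := by
  have hpre : S ∪ {z | z - t ∈ S} = (u * ·) ⁻¹' (S ∪ {z | z - t * u ∈ S}) := by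
    ext z
    simp only [Set.mem_union, Set.mem_ofPred_eq, Set.mem_preimage]
    rw [show u * z - t * u = u * (z - t) by ring, hS, hS]
  rw [hpre, Set.ncard_preimage_of_injective_subset_range hu.mul_right_injective]
  exact fun z _ => ⟨hu.unit⁻¹ * z, hu.unit.mul_inv_cancel_left z⟩

section MB

variable {B : Finset ℕ} {N : ℕ}

lemma mul_mem_MB_iff {m : ℤ} (hm : ∀ b ∈ B, IsCoprime m b) (n : ℤ) :
    m * n ∈ MB B ↔ n ∈ MB B := by
  constructor <;> rintro ⟨b, hb, hbn⟩ <;> refine ⟨b, hb, ?_⟩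
  · exact (hm b hb).symm.dvd_of_dvd_mul_left hbn
  · exact hbn.mul_left m

lemma MB_eq_preimage_intCast_image (hN : ∀ b ∈ B, b ∣ N) :
    MB B = Int.cast ⁻¹' (Int.cast '' MB B : Set (ZMod N)) := by
  refine (Set.subset_preimage_image _ _).antisymm ?_
  rintro n ⟨x, ⟨b, hb, hbx⟩, hxn⟩
  rw [ZMod.intCast_eq_intCast_iff_dvd_sub] at hxn
  refine ⟨b, hb, ?_⟩
  simpa using dvd_add hbx ((Int.natCast_dvd_natCast.mpr (hN b hb)).trans hxn)

lemma MB_union_setOf_sub_mem_eq_preimage (hN : ∀ b ∈ B, b ∣ N) (t : ℤ) :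
    MB B ∪ {n | n - t ∈ MB B} = Int.cast ⁻¹'
      (Int.cast '' MB B ∪ {z : ZMod N | z - t ∈ (Int.cast '' MB B : Set (ZMod N))}) := by
  have hMB (x : ℤ) := Set.ext_iff.mp (MB_eq_preimage_intCast_image hN) x
  ext n
  simp only [Set.mem_union, Set.mem_ofPred_eq, Set.mem_preimage, hMB, Int.cast_sub]

end MB

theorem density_union_shift_coprime_multiple (B : Finset ℕ) (hB : ∀ b ∈ B, 2 ≤ b)
    (r m : ℤ) (hm : ∀ b ∈ B, IsCoprime m (b : ℤ)) :
    ∃ L : ℝ,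
      Filter.Tendsto (cnt (MB B ∪ {n : ℤ | n - r ∈ MB B})) Filter.atTop (nhds L) ∧
      Filter.Tendsto (cnt (MB B ∪ {n : ℤ | n - r * m ∈ MB B})) Filter.atTop (nhds L) := by
  set N := ∏ b ∈ B, b
  have : NeZero N := ⟨(prod_pos fun b hb => by linarith [hB b hb]).ne'⟩
  have hdvd : ∀ b ∈ B, b ∣ N := fun b hb => dvd_prod_of_mem _ hb
  have hunit : IsUnit (m : ZMod N) := by
    rw [ZMod.coe_int_isUnit_iff_isCoprime, Nat.cast_prod]
    exact (IsCoprime.prod_right hm).symm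
  set S : Set (ZMod N) := Int.cast '' MB B
  have hS (z : ZMod N) : (m : ZMod N) * z ∈ S ↔ z ∈ S := by
    obtain ⟨x, rfl⟩ := ZMod.intCast_surjective z
    rw [← Int.cast_mul, ← Set.mem_preimage, ← Set.mem_preimage (f := Int.cast),
      ← MB_eq_preimage_intCast_image hdvd, mul_mem_MB_iff hm]
  refine ⟨(S ∪ {z | z - r ∈ S}).ncard / N, ?_, ?_⟩
  · rw [MB_union_setOf_sub_mem_eq_preimage hdvd]
    exact ZMod.tendsto_cnt_preimage_intCast _
  · rw [MB_union_setOf_sub_mem_eq_preimage hdvd, Int.cast_mul,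
      ← Set.ncard_union_setOf_sub_mul_mem hunit hS]
    exact ZMod.tendsto_cnt_preimage_intCast _
end

section
/- Rogers-type monotonicity for prime-power moduli: let I be a finite index set, p a prime, b_i = p^{e_i} powers of p, g_i ∈ ℤ, and m ∈ ℤ. Then the density of ⋃_{i∈I}(g_i + b_iℤ) is at least the density of ⋃_{i∈I}(m·g_i + b_iℤ). -/
open Filter

/-! Put `q = p ^ max e`. Both sets are preimages of sets of residues `S, S' ⊆ ℤ/q`, so their
densities are `|S| / q` and `|S'| / q`, where `S = ⋃ (g i + H i)` and `S' = ⋃ (m • g i + H i)`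
with `H i = p ^ e i • ℤ/q`. The `H i` form a chain, so their cosets are nested or disjoint. Take
`H i₀` largest: the cosets `g j + H j` lying inside `g i₀ + H i₀` are exactly those with
`g j - g i₀ ∈ H i₀`, and multiplying by `m` keeps `m • g j + H j` inside `m • g i₀ + H i₀`;
every other coset misses `g i₀ + H i₀`. Induction on `I` then gives `|S'| ≤ |S|`. -/

open Finset Topology

theorem ZMod.intCast_mem_zmultiples_natCast_iff {q d : ℕ} (hd : d ∣ q) (x : ℤ) :
    (x : ZMod q) ∈ AddSubgroup.zmultiples (d : ZMod q) ↔ (d : ℤ) ∣ x := by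
  constructor
  · rintro ⟨k, hk⟩
    have hq : ((x - k * d : ℤ) : ZMod q) = 0 := by
      rw [Int.cast_sub, ← hk]; simp
    rw [ZMod.intCast_zmod_eq_zero_iff_dvd] at hq
    simpa using ((Int.natCast_dvd_natCast.2 hd).trans hq).add (dvd_mul_left (d : ℤ) k)
  · rintro ⟨k, rfl⟩
    exact ⟨k, by simp [mul_comm]⟩

theorem AddSubgroup.zmultiples_natCast_le_of_dvd {R : Type*} [Ring R] {a b : ℕ} (h : b ∣ a) :
    AddSubgroup.zmultiples (a : R) ≤ AddSubgroup.zmultiples (b : R) := by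
  obtain ⟨k, rfl⟩ := h
  exact AddSubgroup.zmultiples_le.2 ⟨k, by simpa using Nat.cast_comm k (b : R)⟩

namespace AddSubgroup

variable {G : Type*} [AddCommGroup G]

theorem ncard_setOf_sub_mem (H : AddSubgroup G) (a : G) :
    {y | y - a ∈ H}.ncard = Nat.card H := by
  have : {y | y - a ∈ H} = (a + ·) '' (H : Set G) := by
    ext y
    simp [sub_eq_neg_add]
  rw [this, Set.ncard_image_of_injective _ (add_right_injective a), ← Nat.card_coe_set_eq]
  rfl

theorem ncard_setOf_exists_sub_zsmul_mem_le [Finite G] {ι : Type*} (I : Finset ι)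
    (H : ι → AddSubgroup G) (hH : ∀ i ∈ I, ∀ j ∈ I, H i ≤ H j ∨ H j ≤ H i) (g : ι → G) (m : ℤ) :
    {y | ∃ i ∈ I, y - m • g i ∈ H i}.ncard ≤ {y | ∃ i ∈ I, y - g i ∈ H i}.ncard := by
  classical
  induction I using Finset.strongInduction with
  | H I ih =>
    rcases I.eq_empty_or_nonempty with rfl | hI
    · simp
    obtain ⟨i₀, hi₀, hmax⟩ := I.exists_maximalFor H hI
    have hle : ∀ j ∈ I, H j ≤ H i₀ := fun j hj => (hH j hj i₀ hi₀).elim id (hmax hj)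
    set J := I.filter (fun j => g j - g i₀ ∈ H i₀)
    have hJ : I \ J ⊂ I := sdiff_ssubset (filter_subset _ _) ⟨i₀, by simp [J, hi₀]⟩
    have hsub : ∀ a : ι → G, (∀ j ∈ J, a j - a i₀ ∈ H i₀) →
        {y | ∃ i ∈ I, y - a i ∈ H i}
          ⊆ {y | y - a i₀ ∈ H i₀} ∪ {y | ∃ i ∈ I \ J, y - a i ∈ H i} := by
      rintro a ha y ⟨i, hi, hy⟩
      by_cases hiJ : i ∈ J
      · left
        simpa using add_mem (hle i hi hy) (ha i hiJ)
      · exact Or.inr ⟨i, mem_sdiff.2 ⟨hi, hiJ⟩, hy⟩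
    have hdisj : Disjoint {y | y - g i₀ ∈ H i₀} {y | ∃ i ∈ I \ J, y - g i ∈ H i} := by
      refine Set.disjoint_left.2 fun y hy ⟨i, hi, hyi⟩ => (mem_sdiff.1 hi).2 ?_
      refine mem_filter.2 ⟨(mem_sdiff.1 hi).1, ?_⟩
      simpa using sub_mem hy (hle i (mem_sdiff.1 hi).1 hyi)
    have hcover : {y | ∃ i ∈ I, y - g i ∈ H i}
        = {y | y - g i₀ ∈ H i₀} ∪ {y | ∃ i ∈ I \ J, y - g i ∈ H i} := by
      refine (hsub g fun j hj => (mem_filter.1 hj).2).antisymm ?_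
      rintro y (hy | ⟨i, hi, hy⟩)
      · exact ⟨i₀, hi₀, hy⟩
      · exact ⟨i, (mem_sdiff.1 hi).1, hy⟩
    have hsub_smul := hsub (m • g ·) fun j hj => by
      simpa [← smul_sub] using zsmul_mem (mem_filter.1 hj).2 m
    calc {y | ∃ i ∈ I, y - m • g i ∈ H i}.ncard
        ≤ {y | y - m • g i₀ ∈ H i₀}.ncard + {y | ∃ i ∈ I \ J, y - m • g i ∈ H i}.ncard :=
          (Set.ncard_le_ncard hsub_smul).trans (Set.ncard_union_le _ _)
      _ ≤ {y | y - g i₀ ∈ H i₀}.ncard + {y | ∃ i ∈ I \ J, y - g i ∈ H i}.ncard := by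
          rw [ncard_setOf_sub_mem, ncard_setOf_sub_mem]
          exact Nat.add_le_add_left
            (ih _ hJ fun i hi j hj => hH i (sdiff_subset hi) j (sdiff_subset hj)) _
      _ = {y | ∃ i ∈ I, y - g i ∈ H i}.ncard := by rw [hcover, Set.ncard_union_eq hdisj]

end AddSubgroup

theorem abs_card_filter_modEq_Icc_sub_le {r : ℤ} (hr : 0 < r) (v : ℤ) (n : ℕ) :
    |(#{x ∈ Icc (-(n : ℤ)) n | x ≡ v [ZMOD r]} : ℚ) - (2 * n + 1) / r| ≤ 1 := by
  have hc := Int.Ico_filter_modEq_card (-(n : ℤ)) (n + 1) hr v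
  rw [Ico_add_one_right_eq_Icc] at hc
  simp only [Int.cast_add, Int.cast_neg, Int.cast_natCast, Int.cast_one] at hc
  set A : ℚ := (-(n : ℚ) - v) / r
  set t : ℚ := (2 * n + 1) / r
  have hB : ((n : ℚ) + 1 - v) / r = A + t := by ring
  replace hc : (#{x ∈ Icc (-(n : ℤ)) n | x ≡ v [ZMOD r]} : ℚ) = max ((⌈A + t⌉ : ℚ) - ⌈A⌉) 0 := by
    rw [hB] at hc; exact_mod_cast hc
  have ht : 0 < t := by positivity
  have hlo : t - 1 < (⌈A + t⌉ : ℚ) - ⌈A⌉ := by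
    linarith [Int.le_ceil (A + t), Int.ceil_lt_add_one A]
  have hhi : (⌈A + t⌉ : ℚ) - ⌈A⌉ < t + 1 := by
    linarith [Int.le_ceil A, Int.ceil_lt_add_one (A + t)]
  rw [hc, abs_le]
  constructor
  · linarith [le_max_left ((⌈A + t⌉ : ℚ) - ⌈A⌉) 0]
  · linarith [max_le hhi.le (by linarith : (0 : ℚ) ≤ t + 1)]

theorem tendsto_card_filter_modEq_Icc_div {r : ℤ} (hr : 0 < r) (v : ℤ) :
    Tendsto (fun n : ℕ => (#{x ∈ Icc (-(n : ℤ)) n | x ≡ v [ZMOD r]} : ℝ) / (2 * n + 1))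
      atTop (𝓝 (1 / r)) := by
  rw [tendsto_iff_norm_sub_tendsto_zero]
  refine squeeze_zero (fun _ => norm_nonneg _) (fun n => ?_)
    tendsto_one_div_add_atTop_nhds_zero_nat
  have hn : (0 : ℝ) < 2 * n + 1 := by positivity
  have h : |(#{x ∈ Icc (-(n : ℤ)) n | x ≡ v [ZMOD r]} : ℝ) - (2 * n + 1) / r| ≤ 1 := by
    exact_mod_cast abs_card_filter_modEq_Icc_sub_le hr v n
  calc ‖(#{x ∈ Icc (-(n : ℤ)) n | x ≡ v [ZMOD r]} : ℝ) / (2 * n + 1) - 1 / r‖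
      = |(#{x ∈ Icc (-(n : ℤ)) n | x ≡ v [ZMOD r]} : ℝ) - (2 * n + 1) / r| / (2 * n + 1) := by
        rw [Real.norm_eq_abs, ← abs_of_pos hn, ← abs_div, abs_of_pos hn]
        congr 1; field_simp
    _ ≤ 1 / (2 * n + 1) := by gcongr
    _ ≤ 1 / (n + 1) := by gcongr; linarith [(n.cast_nonneg : (0 : ℝ) ≤ n)]

theorem tendsto_cnt_preimage_intCast (q : ℕ) [NeZero q] (S : Set (ZMod q)) :
    Tendsto (cnt (Int.cast ⁻¹' S)) atTop (𝓝 (S.ncard / q)) := by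
  classical
  have hq : (0 : ℤ) < q := by exact_mod_cast Nat.pos_of_neZero q
  have hfib : ∀ n : ℕ, cnt (Int.cast ⁻¹' S) n = ∑ s ∈ S.toFinset,
      (#{x ∈ Icc (-(n : ℤ)) n | x ≡ (s.cast : ℤ) [ZMOD q]} : ℝ) / (2 * n + 1) := by
    intro n
    rw [cnt, ← sum_div, card_eq_sum_card_fiberwise (f := ((↑) : ℤ → ZMod q)) (t := S.toFinset)]
    · push_cast
      congr 1
      refine sum_congr rfl fun s hs => ?_
      rw [filter_filter]
      congr 2
      refine filter_congr fun x _ => ?_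
      rw [← ZMod.intCast_eq_intCast_iff, ZMod.intCast_zmod_cast]
      exact ⟨And.right, fun h => ⟨by simpa [h] using hs, h⟩⟩
    · intro x hx
      simpa using (mem_filter.1 hx).2
  rw [show cnt _ = _ from funext hfib]
  convert tendsto_finsetSum S.toFinset fun s _ =>
    tendsto_card_filter_modEq_Icc_div hq (s.cast : ℤ)
  simp [Set.ncard_eq_toFinset_card', div_eq_mul_inv]

theorem rogers_prime_power {ι : Type*} (I : Finset ι) (p : ℕ) (hp : p.Prime)
    (e : ι → ℕ) (g : ι → ℤ) (m : ℤ) :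
    ∃ L L' : ℝ,
      Filter.Tendsto (cnt {n : ℤ | ∃ i ∈ I, ((p ^ (e i) : ℕ) : ℤ) ∣ (n - g i)})
        Filter.atTop (nhds L) ∧
      Filter.Tendsto (cnt {n : ℤ | ∃ i ∈ I, ((p ^ (e i) : ℕ) : ℤ) ∣ (n - m * g i)})
        Filter.atTop (nhds L') ∧
      L' ≤ L := by
  set q := p ^ I.sup e
  have : NeZero q := ⟨pow_ne_zero _ hp.ne_zero⟩
  have hdvd : ∀ i ∈ I, p ^ e i ∣ q := fun i hi => pow_dvd_pow p (le_sup hi)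
  set H : ι → AddSubgroup (ZMod q) := fun i => AddSubgroup.zmultiples ((p ^ e i : ℕ) : ZMod q)
  have hH : ∀ i ∈ I, ∀ j ∈ I, H i ≤ H j ∨ H j ≤ H i := fun i _ j _ =>
    (le_total (e j) (e i)).imp
      (fun h => AddSubgroup.zmultiples_natCast_le_of_dvd (pow_dvd_pow p h))
      (fun h => AddSubgroup.zmultiples_natCast_le_of_dvd (pow_dvd_pow p h))
  have hset : ∀ a : ι → ℤ, {n : ℤ | ∃ i ∈ I, ((p ^ e i : ℕ) : ℤ) ∣ n - a i}
      = Int.cast ⁻¹' {y : ZMod q | ∃ i ∈ I, y - a i ∈ H i} := fun a => by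
    ext n
    simp only [Set.mem_ofPred_eq, Set.mem_preimage, ← Int.cast_sub]
    exact exists_congr fun i => and_congr_right fun hi =>
      (ZMod.intCast_mem_zmultiples_natCast_iff (hdvd i hi) _).symm
  have hsmul : {y : ZMod q | ∃ i ∈ I, y - ((m * g i : ℤ) : ZMod q) ∈ H i}
      = {y | ∃ i ∈ I, y - m • (g i : ZMod q) ∈ H i} := by
    simp only [Int.cast_mul, zsmul_eq_mul]
  refine ⟨_, _, hset g ▸ tendsto_cnt_preimage_intCast q _,
    hset (m * g ·) ▸ tendsto_cnt_preimage_intCast q _, ?_⟩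
  rw [hsmul]
  exact div_le_div_of_nonneg_right
    (Nat.cast_le.2 (AddSubgroup.ncard_setOf_exists_sub_zsmul_mem_le I H hH _ m)) q.cast_nonneg
end

section
/- For all integers n ≥ 1, ⌊n/4⌋ · 2^{⌊n/4⌋} ≤ q_{n−1}, where (q_n) are the Fibonacci numbers with q_0 = q_1 = 1, q_{n+1} = q_n + q_{n−1}. -/
/-! Every four steps the Fibonacci numbers at least quadruple, since
`fib (n + 4) = 3 fib (n + 1) + 2 fib n`, while `m * 2 ^ m` at most quadruples once `m ≥ 1`;
so `m * 2 ^ m ≤ fib (4 m)` by induction from `m = 1`, and `q (n - 1) = fib n ≥ fib (4 ⌊n/4⌋)`. -/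

namespace Nat

theorem four_mul_fib_le_fib_add_four (n : ℕ) : 4 * fib n ≤ fib (n + 4) := by
  have h2 : fib (n + 2) = fib n + fib (n + 1) := fib_add_two
  have h3 : fib (n + 3) = fib (n + 1) + fib (n + 2) := fib_add_two
  have h4 : fib (n + 4) = fib (n + 2) + fib (n + 3) := fib_add_two
  have hmono : fib n ≤ fib (n + 1) := fib_le_fib_succ
  omega

theorem mul_two_pow_le_fib_four_mul (m : ℕ) : m * 2 ^ m ≤ fib (4 * m) := by
  rcases m.eq_zero_or_pos with rfl | hm
  · simp
  induction m, hm using le_induction with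
  | base => decide
  | succ m hm ih =>
    calc (m + 1) * 2 ^ (m + 1) = (2 * (m + 1)) * 2 ^ m := by ring
      _ ≤ (4 * m) * 2 ^ m := Nat.mul_le_mul_right _ (by omega)
      _ = 4 * (m * 2 ^ m) := by ring
      _ ≤ 4 * fib (4 * m) := by gcongr
      _ ≤ fib (4 * (m + 1)) := four_mul_fib_le_fib_add_four (4 * m)

end Nat

theorem eq_fib_succ_of_fib_recurrence {q : ℕ → ℕ} (hq0 : q 0 = 1) (hq1 : q 1 = 1)
    (hqrec : ∀ n : ℕ, q (n + 2) = q (n + 1) + q n) (n : ℕ) : q n = Nat.fib (n + 1) := by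
  induction n using Nat.twoStepInduction with
  | zero => simpa using hq0
  | one => simpa using hq1
  | more n ih ih' =>
    rw [hqrec, ih, ih', add_comm]
    exact Nat.fib_add_two.symm

theorem fibonacci_lower_bound (q : ℕ → ℕ) (hq0 : q 0 = 1) (hq1 : q 1 = 1)
    (hqrec : ∀ n : ℕ, q (n + 2) = q (n + 1) + q n) :
    ∀ n : ℕ, 1 ≤ n → (n / 4) * 2 ^ (n / 4) ≤ q (n - 1) := by
  intro n hn
  rw [eq_fib_succ_of_fib_recurrence hq0 hq1 hqrec, Nat.sub_add_cancel hn]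
  calc (n / 4) * 2 ^ (n / 4) ≤ Nat.fib (4 * (n / 4)) := Nat.mul_two_pow_le_fib_four_mul _
    _ ≤ Nat.fib n := Nat.fib_mono (Nat.mul_div_le n 4)
end
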